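/- Let n ≥ 0, let T be an (n+1)×(n+1) Hermitian positive definite complex matrix, let b, d ∈ ℂ^{n+1} with b ≠ 0, let z ∈ ℂ with |z| < 1, and let w ∈ ℂ. Write ⟨x,y⟩_{T⁻¹} = y* T^{−1} x. Then the (n+2)×(n+2) block matrix [[2T, b·w − d], [conj(w)·b* − d*, (w + conj(w))/(1 − z·conj(z))]] is positive semidefinite if and only if |w − (2/(1 − z·conj(z)) + ⟨d,b⟩_{T⁻¹})/⟨b,b⟩_{T⁻¹}|² ≤ |(2/(1 − z·conj(z)) + ⟨b,d⟩_{T⁻¹})/⟨b,b⟩_{T⁻¹}|² − ⟨d,d⟩_{T⁻¹}/⟨b,b⟩_{T⁻¹}. Moreover, equality holds in this inequality if and only if the block matrix is singular. -/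

import Mathlib

open scoped ComplexOrder

noncomputable section

/-- The inner product `⟨x,y⟩_{T⁻¹} = y* T⁻¹ x`. -/
def innerInv (n : ℕ) (T : Matrix (Fin (n + 1)) (Fin (n + 1)) ℂ) (x y : Fin (n + 1) → ℂ) : ℂ :=
  dotProduct (star y) (T⁻¹.mulVec x)

/-- The `(n+2)×(n+2)` block matrix
`[[2T, bw − d], [conj(w)b* − d*, (w + conj w)/(1 − z conj z)]]`. -/
def blockMat (n : ℕ) (T : Matrix (Fin (n + 1)) (Fin (n + 1)) ℂ)
    (b d : Fin (n + 1) → ℂ) (z w : ℂ) :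
    Matrix (Fin (n + 1) ⊕ Unit) (Fin (n + 1) ⊕ Unit) ℂ :=
  Matrix.fromBlocks ((2 : ℂ) • T)
    (fun i _ => b i * w - d i)
    (fun _ j => starRingEnd ℂ w * starRingEnd ℂ (b j) - starRingEnd ℂ (d j))
    (fun _ _ => (w + starRingEnd ℂ w) / (1 - z * starRingEnd ℂ z))

/-! Since `2T` is positive definite, the block matrix is positive semidefinite iff the
Schur complement `s = (w + w̄)/(1 - z z̄) - u* (2T)⁻¹ u` of `2T`, with `u = w b - d`, is
nonnegative, and its determinant is `det (2T) · s`. Expanding the Hermitian form `u* T⁻¹ u`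
in `w` and completing the square gives `s = (B/2) (ρ² - |w - c|²)` with
`B = ⟨b,b⟩_{T⁻¹} > 0`, where `c` is the centre and `ρ²` the right-hand side of the disc
inequality. -/

open Matrix ComplexConjugate

namespace Matrix

variable {m R : Type*} [Fintype m] [DecidableEq m]

theorem posSemidef_fromBlocks_replicateCol_iff [CommRing R] [PartialOrder R] [StarRing R]
    [StarOrderedRing R] {A : Matrix m m R} (hA : A.PosDef) [Invertible A] (u : m → R) (c : R) :
    (fromBlocks A (replicateCol Unit u) (replicateRow Unit (star u))
      (of fun _ _ => c)).PosSemidef ↔ 0 ≤ c - star u ⬝ᵥ A⁻¹ *ᵥ u := by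
  rw [← conjTranspose_replicateCol, hA.fromBlocks₁₁, conjTranspose_replicateCol,
    Matrix.mul_assoc, ← replicateCol_mulVec, replicateRow_mul_replicateCol]
  have : (of fun _ _ => c) - (of fun _ _ => star u ⬝ᵥ A⁻¹ *ᵥ u : Matrix Unit Unit R) =
      diagonal fun _ => c - star u ⬝ᵥ A⁻¹ *ᵥ u := by
    ext; simp
  simp [this]

theorem det_fromBlocks_replicateCol [CommRing R] {A : Matrix m m R} [Invertible A]
    (u v : m → R) (c : R) :
    (fromBlocks A (replicateCol Unit u) (replicateRow Unit v) (of fun _ _ => c)).det =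
      A.det * (c - v ⬝ᵥ A⁻¹ *ᵥ u) := by
  rw [det_fromBlocks₁₁, invOf_eq_nonsing_inv, Matrix.mul_assoc, ← replicateCol_mulVec,
    replicateRow_mul_replicateCol, det_unique (n := Unit)]
  rfl

end Matrix

section innerInv

variable {n : ℕ} {T : Matrix (Fin (n + 1)) (Fin (n + 1)) ℂ}

theorem innerInv_smul {c : ℂ} (hc : c ≠ 0) (hT : IsUnit T.det) (x y : Fin (n + 1) → ℂ) :
    innerInv n (c • T) x y = c⁻¹ * innerInv n T x y := by
  have := invertibleOfNonzero hc
  rw [innerInv, inv_smul T c hT, invOf_eq_inv, smul_mulVec, dotProduct_smul, innerInv, smul_eq_mul]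

theorem innerInv_smul_sub_smul_sub (b d : Fin (n + 1) → ℂ) (w : ℂ) :
    innerInv n T (w • b - d) (w • b - d) =
      w * conj w * innerInv n T b b - conj w * innerInv n T d b - w * innerInv n T b d
        + innerInv n T d d := by
  simp only [innerInv, mulVec_sub, mulVec_smul, star_sub, star_smul, sub_dotProduct,
    dotProduct_sub, smul_dotProduct, dotProduct_smul, smul_eq_mul]
  rw [show star w = conj w from rfl]
  ring

theorem conj_innerInv (hT : T.IsHermitian) (x y : Fin (n + 1) → ℂ) :
    conj (innerInv n T x y) = innerInv n T y x := by
  rw [innerInv, innerInv, star_dotProduct x, star_mulVec, hT.inv.eq, ← dotProduct_mulVec]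
  rfl

theorem innerInv_self_eq_re (hT : T.IsHermitian) (x : Fin (n + 1) → ℂ) :
    innerInv n T x x = (innerInv n T x x).re :=
  (Complex.conj_eq_iff_re.mp (conj_innerInv hT x x)).symm

theorem innerInv_self_pos (hT : T.PosDef) {x : Fin (n + 1) → ℂ} (hx : x ≠ 0) :
    0 < innerInv n T x x :=
  hT.inv.dotProduct_mulVec_pos hx

end innerInv

theorem complete_square_sesq (t B E : ℝ) (hB : B ≠ 0) (P w : ℂ) :
    (w + conj w) / t - 2⁻¹ * (w * conj w * B - conj w * conj P - w * P + E) =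
      ((B / 2 * (‖(2 / t + P) / B‖ ^ 2 - ((E : ℂ) / B).re
        - ‖w - (2 / t + conj P) / B‖ ^ 2) : ℝ) : ℂ) := by
  rw [Complex.sq_norm, Complex.sq_norm]
  apply Complex.ext <;>
    simp only [Complex.normSq_apply, Complex.div_ofReal_re, Complex.div_ofReal_im,
      Complex.add_re, Complex.add_im, Complex.sub_re, Complex.sub_im, Complex.mul_re,
      Complex.mul_im, Complex.conj_re, Complex.conj_im, Complex.ofReal_re, Complex.ofReal_im,
      Complex.inv_re, Complex.inv_im, Complex.re_ofNat, Complex.im_ofNat]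
  · field_simp
    ring
  · ring

def blockMatSchur (n : ℕ) (T : Matrix (Fin (n + 1)) (Fin (n + 1)) ℂ)
    (b d : Fin (n + 1) → ℂ) (z w : ℂ) : ℂ :=
  (w + conj w) / (1 - z * conj z) - innerInv n ((2 : ℂ) • T) (w • b - d) (w • b - d)

section blockMat

variable {n : ℕ} {T : Matrix (Fin (n + 1)) (Fin (n + 1)) ℂ} {b d : Fin (n + 1) → ℂ}
  {z w : ℂ}

theorem blockMat_eq_fromBlocks :
    blockMat n T b d z w = fromBlocks ((2 : ℂ) • T) (replicateCol Unit (w • b - d))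
      (replicateRow Unit (star (w • b - d))) (of fun _ _ => (w + conj w) / (1 - z * conj z)) := by
  rw [blockMat]
  congr 1 <;> ext <;> simp [mul_comm]

theorem blockMat_posSemidef_iff (hT : T.PosDef) :
    (blockMat n T b d z w).PosSemidef ↔ 0 ≤ blockMatSchur n T b d z w := by
  have hT2 : ((2 : ℂ) • T).PosDef := hT.smul two_pos
  have := hT2.isUnit.invertible
  rw [blockMat_eq_fromBlocks, posSemidef_fromBlocks_replicateCol_iff hT2]
  rfl

theorem det_blockMat_eq_zero_iff (hT : IsUnit T.det) :
    (blockMat n T b d z w).det = 0 ↔ blockMatSchur n T b d z w = 0 := by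
  have hT2 : IsUnit ((2 : ℂ) • T).det := by
    rw [det_smul]
    exact ((IsUnit.mk0 _ two_ne_zero).pow _).mul hT
  have := invertibleOfIsUnitDet _ hT2
  rw [blockMat_eq_fromBlocks, det_fromBlocks_replicateCol, mul_eq_zero, or_iff_right hT2.ne_zero]
  rfl

end blockMat

theorem stmt14_general (n : ℕ) (T : Matrix (Fin (n + 1)) (Fin (n + 1)) ℂ) (hT : T.PosDef)
    (b d : Fin (n + 1) → ℂ) (hb : b ≠ 0) (z : ℂ) (w : ℂ) :
    ((blockMat n T b d z w).PosSemidef ↔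
      ‖(w - (2 / (1 - z * starRingEnd ℂ z) + innerInv n T d b)
          / innerInv n T b b)‖ ^ 2 ≤
        ‖((2 / (1 - z * starRingEnd ℂ z) + innerInv n T b d)
          / innerInv n T b b)‖ ^ 2
          - (innerInv n T d d / innerInv n T b b).re) ∧
    (‖(w - (2 / (1 - z * starRingEnd ℂ z) + innerInv n T d b)
          / innerInv n T b b)‖ ^ 2 =
        ‖((2 / (1 - z * starRingEnd ℂ z) + innerInv n T b d)
          / innerInv n T b b)‖ ^ 2
          - (innerInv n T d d / innerInv n T b b).re ↔
      (blockMat n T b d z w).det = 0) := by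
  obtain ⟨B, hB⟩ : ∃ B : ℝ, innerInv n T b b = B :=
    ⟨_, innerInv_self_eq_re hT.isHermitian b⟩
  obtain ⟨E, hE⟩ : ∃ E : ℝ, innerInv n T d d = E :=
    ⟨_, innerInv_self_eq_re hT.isHermitian d⟩
  have hBpos : 0 < B := by simpa [hB] using innerInv_self_pos hT hb
  have hz : 1 - z * conj z = (1 - Complex.normSq z : ℝ) := by
    rw [Complex.mul_conj, Complex.ofReal_sub, Complex.ofReal_one]
  have hdet : IsUnit T.det := (isUnit_iff_isUnit_det T).mp hT.isUnit
  rw [blockMat_posSemidef_iff hT, det_blockMat_eq_zero_iff hdet, blockMatSchur,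
    innerInv_smul two_ne_zero hdet, innerInv_smul_sub_smul_sub,
    ← conj_innerInv hT.isHermitian b d, hB, hE, hz, complete_square_sesq _ _ _ hBpos.ne']
  rw [Complex.zero_le_real, Complex.ofReal_eq_zero, mul_nonneg_iff_of_pos_left (half_pos hBpos),
    sub_nonneg, mul_eq_zero, or_iff_right (half_pos hBpos).ne', sub_eq_zero, eq_comm]
  exact ⟨.rfl, .rfl⟩

/-- Schur-complement characterization: the block matrix is positive
semidefinite iff `w` lies in the disc
`|w − (2/(1−z conj z) + ⟨d,b⟩_{T⁻¹})/⟨b,b⟩_{T⁻¹}|² ≤ |(2/(1−z conj z) + ⟨b,d⟩)/⟨b,b⟩|² − ⟨d,d⟩/⟨b,b⟩`,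
with equality iff the block matrix is singular. -/
theorem stmt14 (n : ℕ) (T : Matrix (Fin (n + 1)) (Fin (n + 1)) ℂ) (hT : T.PosDef)
    (b d : Fin (n + 1) → ℂ) (hb : b ≠ 0) (z : ℂ) (hz : ‖z‖ < 1) (w : ℂ) :
    ((blockMat n T b d z w).PosSemidef ↔
      ‖(w - (2 / (1 - z * starRingEnd ℂ z) + innerInv n T d b)
          / innerInv n T b b)‖ ^ 2 ≤
        ‖((2 / (1 - z * starRingEnd ℂ z) + innerInv n T b d)
          / innerInv n T b b)‖ ^ 2
          - (innerInv n T d d / innerInv n T b b).re) ∧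
    (‖(w - (2 / (1 - z * starRingEnd ℂ z) + innerInv n T d b)
          / innerInv n T b b)‖ ^ 2 =
        ‖((2 / (1 - z * starRingEnd ℂ z) + innerInv n T b d)
          / innerInv n T b b)‖ ^ 2
          - (innerInv n T d d / innerInv n T b b).re ↔
      (blockMat n T b d z w).det = 0) :=
  stmt14_general n T hT b d hb z w

end
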